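/- Let n > m > 0 be integers with gcd(m,n) = c and euclidean sequence remainders l_1 = m > l_2 > ... > l_r = c each appearing with multiplicity k_j = floor(l_{j-1}/l_j) (where l_0 = n). Then the delta-invariant lower bound sum_{j=1}^{r} k_j * l_j * (l_j - 1) / 2 = (n*m - n - m + c)/2; in particular when c = 1 this equals (n-1)(m-1)/2. -/
import Mathlib


/-- The euclidean sequence of remainders of the pair (m,n): `eucl m n 0 = n`,
`eucl m n 1 = m`, `eucl m n (j+2) = eucl m n j % eucl m n (j+1)`. -/
def eucl (m n : ℕ) : ℕ → ℕ
  | 0 => n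
  | 1 => m
  | j+2 => eucl m n j % eucl m n (j+1)

private def F (m n j : ℕ) : ℚ :=
  ((eucl m n j : ℚ) * (eucl m n (j+1) : ℚ) - (eucl m n j : ℚ) - (eucl m n (j+1) : ℚ)) / 2

private lemma eucl_step (m n i : ℕ) :
    eucl m n (i+2) = eucl m n i % eucl m n (i+1) := rfl

private lemma term_eq (m n i : ℕ) :
    ((eucl m n i / eucl m n (i+1) : ℕ) : ℚ) * (eucl m n (i+1) : ℚ)
      * ((eucl m n (i+1) : ℚ) - 1) / 2 = F m n i - F m n (i+1) := by
  by_cases h : eucl m n (i+1) = 0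
  · have h2 : eucl m n (i+2) = eucl m n i := by
      rw [eucl_step, h, Nat.mod_zero]
    simp only [F, h, h2]
    push_cast
    ring
  · have hd := Nat.div_add_mod (eucl m n i) (eucl m n (i+1))
    rw [← eucl_step] at hd
    have hq : ((eucl m n (i+1) : ℚ)) * ((eucl m n i / eucl m n (i+1) : ℕ) : ℚ)
        + (eucl m n (i+2) : ℚ) = (eucl m n i : ℚ) := by
      exact_mod_cast congrArg (Nat.cast : ℕ → ℚ) hd
    simp only [F]
    linear_combination (((eucl m n (i+1) : ℚ)) - 1) / 2 * hq

private lemma eucl_gcd (m n : ℕ) : ∀ j, Nat.gcd (eucl m n (j+1)) (eucl m n j) = Nat.gcd m n := by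
  intro j
  induction j with
  | zero => rfl
  | succ j ih =>
    rw [eucl_step, ← Nat.gcd_rec, ih]

theorem delta_formula (m n r : ℕ) (hm : 0 < m) (hmn : m < n)
    (hr : eucl m n r ≠ 0) (hr0 : eucl m n (r + 1) = 0) :
    (∑ j ∈ Finset.Icc 1 r,
        ((eucl m n (j - 1) / eucl m n j : ℕ) : ℚ) * (eucl m n j : ℚ)
          * ((eucl m n j : ℚ) - 1) / 2)
      = ((n : ℚ) * m - n - m + Nat.gcd m n) / 2
    ∧ (Nat.gcd m n = 1 →
        (∑ j ∈ Finset.Icc 1 r,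
            ((eucl m n (j - 1) / eucl m n j : ℕ) : ℚ) * (eucl m n j : ℚ)
              * ((eucl m n j : ℚ) - 1) / 2)
          = ((n : ℚ) - 1) * ((m : ℚ) - 1) / 2) := by
  have hgcd : eucl m n r = Nat.gcd m n := by
    have := eucl_gcd m n r
    rw [hr0, Nat.gcd_zero_left] at this
    exact this
  have hsum : (∑ j ∈ Finset.Icc 1 r,
        ((eucl m n (j - 1) / eucl m n j : ℕ) : ℚ) * (eucl m n j : ℚ)
          * ((eucl m n j : ℚ) - 1) / 2)
      = ((n : ℚ) * m - n - m + Nat.gcd m n) / 2 := by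
    rw [show Finset.Icc 1 r = Finset.Ico 1 (r+1) by rw [Finset.Ico_add_one_right_eq_Icc], Finset.sum_Ico_eq_sum_range]
    have : ∀ i ∈ Finset.range (r + 1 - 1),
        ((eucl m n ((1 + i) - 1) / eucl m n (1 + i) : ℕ) : ℚ) * (eucl m n (1 + i) : ℚ)
          * ((eucl m n (1 + i) : ℚ) - 1) / 2 = F m n i - F m n (i+1) := by
      intro i _
      have h1 : (1 + i) - 1 = i := by omega
      have h2 : 1 + i = i + 1 := by omega
      rw [h1, h2]
      exact term_eq m n i
    rw [Finset.sum_congr rfl this, Finset.sum_range_sub']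
    have hF0 : F m n 0 = ((n : ℚ) * m - n - m) / 2 := by
      simp only [F]
      rfl
    have hr1 : r + 1 - 1 = r := by omega
    rw [hr1, hF0]
    simp only [F, hr0, hgcd]
    push_cast
    ring
  refine ⟨hsum, fun hc => ?_⟩
  rw [hsum, hc]
  push_cast
  ring
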